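/- Let Λ be a finite subgroup of (ℝ/ℤ)^{d+1} with a unique element x of maximal height 2k, where ht(y) = k for all y ∈ Λ \ {0, x} and k ≥ 2. If Λ is cyclic, then x (equivalently −x) generates Λ, and the order m of Λ satisfies φ(m) ≤ 2, i.e., m ∈ {2, 3, 4, 6}; since m ≥ 3 by assumption m ∈ {3, 4, 6}. -/

import Mathlib

noncomputable section

/-- Fractional-part addition on `[0,1)`-vectors, modelling the group `(ℝ/ℤ)^n`. -/
def fadd {n : ℕ} (x y : Fin n → ℝ) : Fin n → ℝ := fun i => Int.fract (x i + y i)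

/-- Inverse in `(ℝ/ℤ)^n` on `[0,1)`-representatives. -/
def fneg {n : ℕ} (x : Fin n → ℝ) : Fin n → ℝ := fun i => Int.fract (-(x i))

/-- `j`-fold sum in `(ℝ/ℤ)^n` on `[0,1)`-representatives. -/
def fsmul {n : ℕ} (j : ℤ) (x : Fin n → ℝ) : Fin n → ℝ := fun i => Int.fract ((j : ℝ) * x i)

/-- The height `ht x = ∑ i, x i` of a `[0,1)`-vector. -/
def ht {n : ℕ} (x : Fin n → ℝ) : ℝ := ∑ i, x i

/-- The support `supp x = {i : x i ≠ 0}`. -/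
def supp {n : ℕ} (x : Fin n → ℝ) : Set (Fin n) := {i | x i ≠ 0}

/-- `S ⊆ [0,1)^n` is a subgroup of `(ℝ/ℤ)^n` (in `[0,1)`-coordinates). -/
def IsSubgroupSet {n : ℕ} (S : Set (Fin n → ℝ)) : Prop :=
  (∀ x ∈ S, ∀ i, x i ∈ Set.Ico (0 : ℝ) 1) ∧ 0 ∈ S ∧
    (∀ x ∈ S, ∀ y ∈ S, fadd x y ∈ S) ∧ ∀ x ∈ S, fneg x ∈ S

/-- The subgroup of `(ℝ/ℤ)^n` generated by a set of `[0,1)`-vectors. -/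
def genSet {n : ℕ} (gs : Set (Fin n → ℝ)) : Set (Fin n → ℝ) :=
  ⋂₀ {S | IsSubgroupSet S ∧ gs ⊆ S}

/-!
Reading `[0,1)`-coordinates as points of the torus `(ℝ/ℤ)^(d+1)` turns `fsmul` into `zsmul`, so
`j • x = j' • x` exactly when `j ≡ j'` modulo the order `m` of `x`. For `y` with coordinates in
`[0,1)` one has `ht y + ht (-y) = #(supp y)`; hence every `y ∈ S \ {0, x, -x}` has `#(supp y) = 2k`
while `#(supp x) ≥ 3k`. Supports can only shrink under `y ↦ j • y`, and are preserved when `j` is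
invertible modulo the order of `y`. So a generator must be `±x`, and every unit `j` modulo `m`
has `j • x ∈ {x, -x}`, i.e. `j ≡ ±1`. Finally, if every unit modulo `m ≥ 3` is `±1`, then
`m ∈ {3, 4, 6}`: otherwise `2` (for `m` odd), `2t - 1` (for `m = 4t`), or a lift of `2` from the
odd part `s` of `m = 2s` would be another unit.
-/

open Set

def toTorus {n : ℕ} (y : Fin n → ℝ) : Fin n → UnitAddCircle := fun i => (y i : UnitAddCircle)

section Torus

variable {n : ℕ}

lemma toTorus_fadd (y z : Fin n → ℝ) : toTorus (fadd y z) = toTorus y + toTorus z := by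
  funext i
  simp [toTorus, fadd]

lemma toTorus_fneg (y : Fin n → ℝ) : toTorus (fneg y) = -toTorus y := by
  funext i
  simp [toTorus, fneg]

lemma toTorus_fsmul (j : ℤ) (y : Fin n → ℝ) : toTorus (fsmul j y) = j • toTorus y := by
  funext i
  simp [toTorus, fsmul, ← zsmul_eq_mul]

lemma toTorus_injOn : InjOn toTorus {y : Fin n → ℝ | ∀ i, y i ∈ Ico (0 : ℝ) 1} := by
  intro y hy z hz h
  funext i
  have hyi : y i ∈ Ico (0 : ℝ) (0 + 1) := by simpa using hy i
  have hzi : z i ∈ Ico (0 : ℝ) (0 + 1) := by simpa using hz i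
  exact (AddCircle.coe_eq_coe_iff_of_mem_Ico hyi hzi).1 (congrFun h i)

lemma fadd_mem_Ico (y z : Fin n → ℝ) (i : Fin n) : fadd y z i ∈ Ico (0 : ℝ) 1 :=
  ⟨Int.fract_nonneg _, Int.fract_lt_one _⟩

lemma fneg_mem_Ico (y : Fin n → ℝ) (i : Fin n) : fneg y i ∈ Ico (0 : ℝ) 1 :=
  ⟨Int.fract_nonneg _, Int.fract_lt_one _⟩

lemma fsmul_mem_Ico (j : ℤ) (y : Fin n → ℝ) (i : Fin n) : fsmul j y i ∈ Ico (0 : ℝ) 1 :=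
  ⟨Int.fract_nonneg _, Int.fract_lt_one _⟩

lemma fsmul_eq_fsmul_iff {a b : ℤ} {y : Fin n → ℝ} :
    fsmul a y = fsmul b y ↔ (a : ZMod (addOrderOf (toTorus y))) = b := by
  rw [ZMod.intCast_eq_intCast_iff, ← zsmul_eq_zsmul_iff_modEq, ← toTorus_fsmul, ← toTorus_fsmul]
  exact ⟨congrArg toTorus, fun h => toTorus_injOn (fsmul_mem_Ico a y) (fsmul_mem_Ico b y) h⟩

lemma fsmul_zero (y : Fin n → ℝ) : fsmul 0 y = 0 := by
  funext i
  simp [fsmul]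

lemma fsmul_of_zero (j : ℤ) : fsmul j (0 : Fin n → ℝ) = 0 := by
  funext i
  simp [fsmul]

lemma fsmul_one {y : Fin n → ℝ} (hy : ∀ i, y i ∈ Ico (0 : ℝ) 1) : fsmul 1 y = y :=
  toTorus_injOn (fsmul_mem_Ico 1 y) hy (by rw [toTorus_fsmul, one_zsmul])

lemma fsmul_neg_one (y : Fin n → ℝ) : fsmul (-1) y = fneg y := by
  funext i
  simp [fsmul, fneg]

lemma fsmul_fsmul (a b : ℤ) (y : Fin n → ℝ) : fsmul a (fsmul b y) = fsmul (a * b) y :=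
  toTorus_injOn (fsmul_mem_Ico _ _) (fsmul_mem_Ico _ _) (by simp only [toTorus_fsmul, mul_zsmul])

lemma fneg_fneg {y : Fin n → ℝ} (hy : ∀ i, y i ∈ Ico (0 : ℝ) 1) : fneg (fneg y) = y :=
  toTorus_injOn (fneg_mem_Ico _) hy (by rw [toTorus_fneg, toTorus_fneg, neg_neg])

lemma fneg_ne_zero {y : Fin n → ℝ} (hy : ∀ i, y i ∈ Ico (0 : ℝ) 1) (hy0 : y ≠ 0) :
    fneg y ≠ 0 := by
  intro h
  apply hy0
  rw [← fneg_fneg hy, h, ← fsmul_neg_one, fsmul_of_zero]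

lemma IsSubgroupSet.fsmul_mem {S : Set (Fin n → ℝ)} (hS : IsSubgroupSet S) {y : Fin n → ℝ}
    (hy : y ∈ S) (j : ℤ) : fsmul j y ∈ S := by
  obtain ⟨hIco, h0, hadd, hneg⟩ := hS
  have hsucc (a : ℤ) : fadd (fsmul a y) y = fsmul (a + 1) y :=
    toTorus_injOn (fadd_mem_Ico _ _) (fsmul_mem_Ico _ _)
      (by rw [toTorus_fadd, toTorus_fsmul, toTorus_fsmul, add_zsmul, one_zsmul])
  induction j using Int.induction_on with
  | zero => rwa [fsmul_zero]
  | succ i ih => simpa [hsucc] using hadd _ ih _ hy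
  | pred i ih =>
    have h := hneg _ (hadd _ (hneg _ ih) _ hy)
    rw [← fsmul_neg_one, ← fsmul_neg_one, fsmul_fsmul, hsucc, fsmul_fsmul] at h
    convert h using 2
    ring

end Torus

section Height

variable {n : ℕ}

lemma ne_zero_of_ht_pos {y : Fin n → ℝ} (hy : 0 < ht y) : y ≠ 0 := by
  rintro rfl
  simp [ht] at hy

lemma ht_add_ht_fneg {y : Fin n → ℝ} (hy : ∀ i, y i ∈ Ico (0 : ℝ) 1) :
    ht y + ht (fneg y) = (supp y).ncard := by
  classical
  rw [ht, ht, ← Finset.sum_add_distrib, supp, ncard_eq_toFinset_card', toFinset_ofPred,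
    Finset.card_filter, Nat.cast_sum]
  refine Finset.sum_congr rfl fun i _ => ?_
  by_cases h : y i = 0
  · simp [fneg, h]
  · have hfract : Int.fract (y i) = y i := Int.fract_eq_self.2 (hy i)
    rw [fneg, Int.fract_neg (by rwa [hfract]), hfract, if_pos h]
    ring

lemma supp_fsmul_subset (j : ℤ) (y : Fin n → ℝ) : supp (fsmul j y) ⊆ supp y := by
  intro i hi hyi
  simp [supp, fsmul, hyi] at hi

variable {S : Set (Fin n → ℝ)} {x : Fin n → ℝ} {k : ℝ}

lemma ncard_supp_eq_two_mul (hS : IsSubgroupSet S) (hall : ∀ y ∈ S, y ≠ 0 → y ≠ x → ht y = k)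
    {y : Fin n → ℝ} (hy : y ∈ S) (hy0 : y ≠ 0) (hyx : y ≠ x) (hyx' : fneg y ≠ x) :
    ((supp y).ncard : ℝ) = 2 * k := by
  have hneg0 := fneg_ne_zero (hS.1 y hy) hy0
  rw [← ht_add_ht_fneg (hS.1 y hy), hall y hy hy0 hyx, hall _ (hS.2.2.2 y hy) hneg0 hyx']
  ring

lemma three_mul_le_ncard_supp (hS : IsSubgroupSet S) (hk : 0 < k) (hx : x ∈ S)
    (hhtx : ht x = 2 * k) (hall : ∀ y ∈ S, y ≠ 0 → y ≠ x → ht y = k) :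
    3 * k ≤ (supp x).ncard := by
  have hx0 : x ≠ 0 := ne_zero_of_ht_pos (by linarith)
  have hneg : k ≤ ht (fneg x) := by
    by_cases hnegx : fneg x = x
    · rw [hnegx, hhtx]
      linarith
    · rw [hall _ (hS.2.2.2 x hx) (fneg_ne_zero (hS.1 x hx) hx0) hnegx]
  rw [← ht_add_ht_fneg (hS.1 x hx)]
  linarith

end Height

section Cyclic

variable {n : ℕ} {S : Set (Fin n → ℝ)} {x : Fin n → ℝ} {k : ℝ}

def IsGenerator (S : Set (Fin n → ℝ)) (g : Fin n → ℝ) : Prop :=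
  ∀ y ∈ S, ∃ j : ℤ, y = fsmul j g

lemma IsGenerator.ncard_eq_addOrderOf {g : Fin n → ℝ} (hgen : IsGenerator S g)
    (hS : IsSubgroupSet S) (hg : g ∈ S) : S.ncard = addOrderOf (toTorus g) := by
  have hrange : S = range fun j : ℤ => fsmul j g :=
    Subset.antisymm (fun y hy => (hgen y hy).imp fun _ h => h.symm)
      (range_subset_iff.2 (hS.fsmul_mem hg))
  have himage : toTorus '' S = AddSubgroup.zmultiples (toTorus g) := by
    rw [AddSubgroup.coe_zmultiples, hrange, ← range_comp]
    simp only [Function.comp_def, toTorus_fsmul]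
  rw [← (toTorus_injOn.mono fun y hy => hS.1 y hy).ncard_image, himage]
  exact Nat.card_zmultiples _

lemma not_supp_subset_supp (hS : IsSubgroupSet S) (hk : 0 < k) (hx : x ∈ S) (hhtx : ht x = 2 * k)
    (hall : ∀ y ∈ S, y ≠ 0 → y ≠ x → ht y = k) {y : Fin n → ℝ} (hy : y ∈ S) (hy0 : y ≠ 0)
    (hyx : y ≠ x) (hyx' : fneg y ≠ x) : ¬ supp x ⊆ supp y := by
  intro hsub
  have hx3 := three_mul_le_ncard_supp hS hk hx hhtx hall
  have hy2 := ncard_supp_eq_two_mul hS hall hy hy0 hyx hyx'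
  have hle : ((supp x).ncard : ℝ) ≤ (supp y).ncard := by
    exact_mod_cast ncard_le_ncard hsub (toFinite _)
  linarith

lemma eq_or_fneg_eq_of_isGenerator (hS : IsSubgroupSet S) (hk : 0 < k) (hx : x ∈ S)
    (hhtx : ht x = 2 * k) (hall : ∀ y ∈ S, y ≠ 0 → y ≠ x → ht y = k) {g : Fin n → ℝ}
    (hg : g ∈ S) (hgen : IsGenerator S g) : x = g ∨ fneg g = x := by
  obtain ⟨j, hj⟩ := hgen x hx
  by_contra! h
  refine not_supp_subset_supp hS hk hx hhtx hall hg ?_ h.1.symm h.2 (hj ▸ supp_fsmul_subset j g)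
  rintro rfl
  rw [fsmul_of_zero] at hj
  exact ne_zero_of_ht_pos (by linarith) hj

lemma isGenerator_of_exists_isGenerator (hS : IsSubgroupSet S) (hk : 0 < k) (hx : x ∈ S)
    (hhtx : ht x = 2 * k) (hall : ∀ y ∈ S, y ≠ 0 → y ≠ x → ht y = k)
    (hcyc : ∃ g ∈ S, IsGenerator S g) : IsGenerator S x := by
  obtain ⟨g, hg, hgen⟩ := hcyc
  rcases eq_or_fneg_eq_of_isGenerator hS hk hx hhtx hall hg hgen with rfl | hneg
  · exact hgen
  · intro y hy
    obtain ⟨j, rfl⟩ := hgen y hy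
    refine ⟨-j, ?_⟩
    rw [← hneg, ← fsmul_neg_one, fsmul_fsmul, neg_mul_neg, mul_one]

lemma fsmul_eq_self_or_fneg_fsmul_eq (hS : IsSubgroupSet S) (hk : 0 < k) (hx : x ∈ S)
    (hhtx : ht x = 2 * k) (hall : ∀ y ∈ S, y ≠ 0 → y ≠ x → ht y = k) {a b : ℤ}
    (hba : fsmul (b * a) x = x) : fsmul a x = x ∨ fneg (fsmul a x) = x := by
  have hback : fsmul b (fsmul a x) = x := by rw [fsmul_fsmul, hba]
  by_contra! h
  refine not_supp_subset_supp hS hk hx hhtx hall (hS.fsmul_mem hx a) ?_ h.1 h.2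
    (by simpa only [hback] using supp_fsmul_subset b (fsmul a x))
  intro h0
  rw [h0, fsmul_of_zero] at hback
  exact ne_zero_of_ht_pos (by linarith) hback.symm

lemma units_eq_one_or_neg_one (hS : IsSubgroupSet S) (hk : 0 < k) (hx : x ∈ S)
    (hhtx : ht x = 2 * k) (hall : ∀ y ∈ S, y ≠ 0 → y ≠ x → ht y = k)
    (w : (ZMod (addOrderOf (toTorus x)))ˣ) :
    (w : ZMod (addOrderOf (toTorus x))) = 1 ∨ (w : ZMod (addOrderOf (toTorus x))) = -1 := by
  obtain ⟨a, ha⟩ := ZMod.intCast_surjective (w : ZMod (addOrderOf (toTorus x)))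
  obtain ⟨b, hb⟩ := ZMod.intCast_surjective (↑w⁻¹ : ZMod (addOrderOf (toTorus x)))
  have hone := fsmul_one (hS.1 x hx)
  have hba : fsmul (b * a) x = x := by
    conv_rhs => rw [← hone]
    rw [fsmul_eq_fsmul_iff]
    push_cast
    rw [ha, hb, Units.inv_mul]
  rcases fsmul_eq_self_or_fneg_fsmul_eq hS hk hx hhtx hall hba with h | h
  · left
    conv_rhs at h => rw [← hone]
    rw [fsmul_eq_fsmul_iff] at h
    rw [← ha, h, Int.cast_one]
  · right
    rw [← fsmul_neg_one, fsmul_fsmul] at h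
    conv_rhs at h => rw [← hone]
    rw [fsmul_eq_fsmul_iff] at h
    rw [← ha]
    push_cast at h
    linear_combination -h

end Cyclic

section UnitsOfZMod

open Nat

variable {m : ℕ}

lemma ZMod.units_eq_one_or_neg_one_of_dvd {n : ℕ} [NeZero m] (hnm : n ∣ m)
    (h : ∀ w : (ZMod m)ˣ, (w : ZMod m) = 1 ∨ (w : ZMod m) = -1) (w : (ZMod n)ˣ) :
    (w : ZMod n) = 1 ∨ (w : ZMod n) = -1 := by
  obtain ⟨w, rfl⟩ := ZMod.unitsMap_surjective hnm w
  have hcast : (ZMod.unitsMap hnm w : ZMod n) = ZMod.castHom hnm (ZMod n) w := rfl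
  rcases h w with h1 | h1
  · left
    rw [hcast, h1, map_one]
  · right
    rw [hcast, h1, map_neg, map_one]

lemma ZMod.dvd_sub_one_or_dvd_add_one
    (h : ∀ w : (ZMod m)ˣ, (w : ZMod m) = 1 ∨ (w : ZMod m) = -1) {a b : ℤ}
    (hab : (m : ℤ) ∣ a * b - 1) : (m : ℤ) ∣ a - 1 ∨ (m : ℤ) ∣ a + 1 := by
  have hunit : (a : ZMod m) * b = 1 := by
    rw [← Int.cast_mul, ← Int.cast_one, ZMod.intCast_eq_intCast_iff_dvd_sub, dvd_sub_comm]
    exact hab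
  rcases h (Units.mkOfMulEqOne _ _ hunit) with h1 | h1
  · left
    rw [Units.val_mkOfMulEqOne, ← Int.cast_one, ZMod.intCast_eq_intCast_iff_dvd_sub,
      dvd_sub_comm] at h1
    exact h1
  · right
    rw [Units.val_mkOfMulEqOne, ← Int.cast_one, ← Int.cast_neg,
      ZMod.intCast_eq_intCast_iff_dvd_sub, dvd_sub_comm, sub_neg_eq_add] at h1
    exact h1

lemma le_one_of_units_zmod_two_mul_add_one {s : ℕ}
    (h : ∀ w : (ZMod (2 * s + 1))ˣ, (w : ZMod (2 * s + 1)) = 1 ∨ (w : ZMod (2 * s + 1)) = -1) :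
    s ≤ 1 := by
  have hinv : ((2 * s + 1 : ℕ) : ℤ) ∣ 2 * (s + 1) - 1 := ⟨1, by push_cast; ring⟩
  rcases ZMod.dvd_sub_one_or_dvd_add_one h hinv with h1 | h1
  · have := Int.le_of_dvd one_pos h1
    omega
  · have := Int.le_of_dvd (by norm_num) h1
    omega

lemma le_one_of_units_zmod_four_mul {t : ℕ}
    (h : ∀ w : (ZMod (4 * t))ˣ, (w : ZMod (4 * t)) = 1 ∨ (w : ZMod (4 * t)) = -1) :
    t ≤ 1 := by
  by_contra! ht
  have hinv : ((4 * t : ℕ) : ℤ) ∣ (2 * t - 1) * (2 * t - 1) - 1 := ⟨t - 1, by push_cast; ring⟩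
  rcases ZMod.dvd_sub_one_or_dvd_add_one h hinv with h1 | h1
  · have := Int.le_of_dvd (by omega) h1
    omega
  · have := Int.le_of_dvd (by omega) h1
    omega

theorem eq_three_or_four_or_six_of_units_zmod (hm : 3 ≤ m)
    (h : ∀ w : (ZMod m)ˣ, (w : ZMod m) = 1 ∨ (w : ZMod m) = -1) : m = 3 ∨ m = 4 ∨ m = 6 := by
  obtain ⟨s, rfl | rfl⟩ := Nat.even_or_odd' m
  · obtain ⟨t, rfl | rfl⟩ := Nat.even_or_odd' s
    · rw [← mul_assoc] at h
      have := le_one_of_units_zmod_four_mul h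
      omega
    · have : NeZero (2 * (2 * t + 1)) := ⟨by omega⟩
      have := le_one_of_units_zmod_two_mul_add_one
        (ZMod.units_eq_one_or_neg_one_of_dvd (dvd_mul_left _ 2) h)
      omega
  · have := le_one_of_units_zmod_two_mul_add_one h
    omega

theorem totient_le_two_of_units_zmod [NeZero m]
    (h : ∀ w : (ZMod m)ˣ, (w : ZMod m) = 1 ∨ (w : ZMod m) = -1) : φ m ≤ 2 := by
  classical
  rw [← ZMod.card_units_eq_totient, ← Finset.card_univ]
  calc Finset.univ.card ≤ ({1, -1} : Finset (ZMod m)ˣ).card :=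
        Finset.card_le_card fun w _ => by rcases h w with h1 | h1 <;> simp [Units.ext_iff, h1]
    _ ≤ 2 := Finset.card_le_two

end UnitsOfZMod

theorem stmt16_general (d k : ℕ) (hk : 2 ≤ k) (S : Set (Fin (d+1) → ℝ)) (hS : IsSubgroupSet S)
    (hm : 3 ≤ S.ncard)
    (x : Fin (d+1) → ℝ) (hx : x ∈ S) (hhtx : ht x = 2 * k)
    (hall : ∀ y ∈ S, y ≠ (0 : Fin (d+1) → ℝ) → y ≠ x → ht y = (k : ℝ))
    (hcyc : ∃ g ∈ S, ∀ y ∈ S, ∃ j : ℤ, y = fsmul j g) :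
    (∀ y ∈ S, ∃ j : ℤ, y = fsmul j x) ∧
      Nat.totient S.ncard ≤ 2 ∧ (S.ncard = 3 ∨ S.ncard = 4 ∨ S.ncard = 6) := by
  have hk0 : (0 : ℝ) < k := by exact_mod_cast (by omega : 0 < k)
  have hxgen := isGenerator_of_exists_isGenerator hS hk0 hx hhtx hall hcyc
  have hunits := units_eq_one_or_neg_one hS hk0 hx hhtx hall
  rw [← hxgen.ncard_eq_addOrderOf hS hx] at hunits
  have : NeZero S.ncard := ⟨by omega⟩
  exact ⟨hxgen, totient_le_two_of_units_zmod hunits,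
    eq_three_or_four_or_six_of_units_zmod hm hunits⟩

theorem stmt16 (d k : ℕ) (hk : 2 ≤ k) (S : Set (Fin (d+1) → ℝ)) (hS : IsSubgroupSet S)
    (hfin : S.Finite) (hm : 3 ≤ S.ncard)
    (x : Fin (d+1) → ℝ) (hx : x ∈ S) (hhtx : ht x = 2 * k)
    (huniq : ∀ y ∈ S, ht y = (2 * k : ℝ) → y = x)
    (hall : ∀ y ∈ S, y ≠ (0 : Fin (d+1) → ℝ) → y ≠ x → ht y = (k : ℝ))
    (hcyc : ∃ g ∈ S, ∀ y ∈ S, ∃ j : ℤ, y = fsmul j g) :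
    (∀ y ∈ S, ∃ j : ℤ, y = fsmul j x) ∧
      Nat.totient S.ncard ≤ 2 ∧ (S.ncard = 3 ∨ S.ncard = 4 ∨ S.ncard = 6) :=
  stmt16_general d k hk S hS hm x hx hhtx hall hcyc
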